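/- If every node of a hypergraph has degree at least 1 and every hyperedge has cardinality at least 1, then the operator norm (largest singular value) of L_ve = D_v^{-1/2} H D_e^{-1/2} is at most 1. -/

import Mathlib

/-! Write `r i` and `c j` for the row and column sums of a nonnegative matrix `A`. Cauchy–Schwarz
with weights `A i j` gives, for each row,
`(∑ j, A i j * x j / √(r i * c j))² ≤ (∑ j, A i j / r i) * (∑ j, A i j * x j² / c j) ≤ ∑ j, A i j * x j² / c j`,
and summing over `i` collapses the right-hand side to `∑ j, x j²`. Because `0 / 0 = 0`, the bound
`a / a ≤ 1` also covers zero row or column sums, so these need no case split. -/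

open Matrix

noncomputable def opNorm {m n : Type*} [Fintype m] [Fintype n] [DecidableEq n]
    (M : Matrix m n ℝ) : ℝ :=
  ‖LinearMap.toContinuousLinearMap (Matrix.toEuclideanLin M)‖

open Finset

theorem opNorm_le_one_of_sum_sq_mulVec_le {m n : Type*} [Fintype m] [Fintype n] [DecidableEq n]
    (M : Matrix m n ℝ) (hM : ∀ x : n → ℝ, ∑ i, (M *ᵥ x) i ^ 2 ≤ ∑ j, x j ^ 2) :
    opNorm M ≤ 1 := by
  refine ContinuousLinearMap.opNorm_le_bound _ zero_le_one fun x => ?_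
  rw [one_mul, EuclideanSpace.norm_eq, EuclideanSpace.norm_eq]
  simp only [Real.norm_eq_abs, sq_abs]
  exact Real.sqrt_le_sqrt (hM x)

theorem sq_sum_div_sqrt_mul_le {n : Type*} [Fintype n] {r : ℝ} {a c : n → ℝ}
    (ha : ∀ j, 0 ≤ a j) (hc : ∀ j, 0 ≤ c j) (hr : r = ∑ j, a j) (x : n → ℝ) :
    (∑ j, a j / (√r * √(c j)) * x j) ^ 2 ≤ ∑ j, a j * x j ^ 2 / c j := by
  have hr_nonneg : 0 ≤ r := hr ▸ sum_nonneg fun j _ => ha j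
  have hg_nonneg : ∀ j, 0 ≤ a j * x j ^ 2 / c j := fun j =>
    div_nonneg (mul_nonneg (ha j) (sq_nonneg _)) (hc j)
  calc _ ≤ (∑ j, a j / r) * ∑ j, a j * x j ^ 2 / c j :=
        sum_sq_le_sum_mul_sum_of_sq_le_mul univ (fun j _ => div_nonneg (ha j) hr_nonneg)
          (fun j _ => hg_nonneg j) fun j _ => le_of_eq <| by
            rw [mul_pow, div_pow, mul_pow, Real.sq_sqrt hr_nonneg, Real.sq_sqrt (hc j)]; ring
    _ ≤ ∑ j, a j * x j ^ 2 / c j := by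
        rw [← sum_div, ← hr]
        exact mul_le_of_le_one_left (sum_nonneg fun j _ => hg_nonneg j) (div_self_le_one r)

theorem sum_sq_normalized_mulVec_le {m n : Type*} [Fintype m] [Fintype n] [DecidableEq m]
    [DecidableEq n] (A : Matrix m n ℝ) (hA : ∀ i j, 0 ≤ A i j) (x : n → ℝ) :
    ∑ i, ((diagonal (fun i => 1 / √(∑ j, A i j)) * A * diagonal (fun j => 1 / √(∑ i, A i j)))
      *ᵥ x) i ^ 2 ≤ ∑ j, x j ^ 2 := by
  have hentry : ∀ i j, 1 / √(∑ j, A i j) * A i j * (1 / √(∑ i, A i j)) =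
      A i j / (√(∑ j, A i j) * √(∑ i, A i j)) := fun i j => by field_simp
  simp only [mulVec, dotProduct, mul_diagonal, diagonal_mul, hentry]
  calc _ ≤ ∑ i, ∑ j, A i j * x j ^ 2 / ∑ i, A i j :=
        sum_le_sum fun i _ => sq_sum_div_sqrt_mul_le (hA i)
          (fun j => sum_nonneg fun i _ => hA i j) rfl x
    _ = ∑ j, (∑ i, A i j) / (∑ i, A i j) * x j ^ 2 := by
        rw [sum_comm]
        simp only [sum_div, sum_mul, div_mul_eq_mul_div]
    _ ≤ ∑ j, x j ^ 2 :=
        sum_le_sum fun j _ => mul_le_of_le_one_left (sq_nonneg _) (div_self_le_one _)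

theorem normalized_incidence_opNorm_le_one_general {n m : ℕ}
    (H : Matrix (Fin n) (Fin m) ℝ)
    (hH : ∀ i e, H i e = 0 ∨ H i e = 1)
    (dv : Fin n → ℝ) (de : Fin m → ℝ)
    (hdv_def : ∀ i, dv i = ∑ e, H i e)
    (hde_def : ∀ e, de e = ∑ i, H i e) :
    opNorm (Matrix.diagonal (fun i => 1 / Real.sqrt (dv i)) * H *
      Matrix.diagonal (fun e => 1 / Real.sqrt (de e))) ≤ 1 := by
  obtain rfl : dv = fun i => ∑ e, H i e := funext hdv_def
  obtain rfl : de = fun e => ∑ i, H i e := funext hde_def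
  have hH_nonneg : ∀ i e, 0 ≤ H i e := fun i e => by rcases hH i e with h | h <;> simp [h]
  exact opNorm_le_one_of_sum_sq_mulVec_le _ (sum_sq_normalized_mulVec_le H hH_nonneg)

theorem normalized_incidence_opNorm_le_one {n m : ℕ}
    (H : Matrix (Fin n) (Fin m) ℝ)
    (hH : ∀ i e, H i e = 0 ∨ H i e = 1)
    (dv : Fin n → ℝ) (de : Fin m → ℝ)
    (hdv_def : ∀ i, dv i = ∑ e, H i e)
    (hde_def : ∀ e, de e = ∑ i, H i e)
    (hdv : ∀ i, 1 ≤ dv i) (hde : ∀ e, 1 ≤ de e) :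
    opNorm (Matrix.diagonal (fun i => 1 / Real.sqrt (dv i)) * H *
      Matrix.diagonal (fun e => 1 / Real.sqrt (de e))) ≤ 1 :=
  normalized_incidence_opNorm_le_one_general H hH dv de hdv_def hde_def
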